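/- Let T be a Hom-finite Krull-Schmidt triangulated category with Serre functor, M a d-silting object admitting a right adjacent t-structure, and N a direct summand of M. Then the left mutation μ⁻_N(M) is a (d+1)-silting object. -/

import Mathlib

open CategoryTheory Limits Pretriangulated

universe v u

section Preamble

variable (k : Type u) [Field k]
variable (C : Type u) [Category.{v} C] [Preadditive C] [CategoryTheory.Linear k C]
  [HasZeroObject C] [HasShift C ℤ] [∀ n : ℤ, (CategoryTheory.shiftFunctor C n).Additive]
  [Pretriangulated C] [HasFiniteBiproducts C]

/-- Hom-finiteness over `k`. -/
def HomFinite : Prop := ∀ X Y : C, FiniteDimensional k (X ⟶ Y)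

variable {C}

/-- A Krull–Schmidt category: every object is a finite direct sum of objects with
local endomorphism rings. -/
def KrullSchmidt : Prop :=
  ∀ X : C, ∃ (n : ℕ) (Y : Fin n → C),
    Nonempty (X ≅ ⨁ Y) ∧ ∀ i, IsLocalRing (CategoryTheory.End (Y i))

variable {k}

/-- `X` belongs to `add M`: it is a retract of a finite direct sum of copies of `M`. -/
def inAdd (M X : C) : Prop :=
  ∃ (n : ℕ) (ι : X ⟶ ⨁ (fun _ : Fin n => M)) (ρ : ⨁ (fun _ : Fin n => M) ⟶ X),
    ι ≫ ρ = 𝟙 X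

/-- `X` belongs to `add` of a family of objects. -/
def inAddSet (P : Set C) (X : C) : Prop :=
  ∃ (n : ℕ) (Y : Fin n → C) (ι : X ⟶ ⨁ Y) (ρ : ⨁ Y ⟶ X),
    (∀ i, Y i ∈ P) ∧ ι ≫ ρ = 𝟙 X

/-- The smallest thick (triangulated, closed under direct summands) subcategory
containing `M`. -/
inductive inThick (M : C) : C → Prop
  | base : inThick M M
  | shift (X : C) (n : ℤ) : inThick M X → inThick M (X⟦n⟧)
  | retractOf (X Y : C) : inThick M Y → (∃ (i : X ⟶ Y) (r : Y ⟶ X), i ≫ r = 𝟙 X) →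
      inThick M X
  | ext2 (T : Triangle C) : T ∈ distinguishedTriangles →
      inThick M T.obj₁ → inThick M T.obj₃ → inThick M T.obj₂

/-- Silting object: presilting and generating. -/
structure IsSilting (M : C) : Prop where
  presilting : ∀ n : ℤ, 0 < n → ∀ f : M ⟶ M⟦n⟧, f = 0
  generates : ∀ X : C, inThick M X

/-- Tilting object: pretilting and generating. -/
structure IsTilting (M : C) : Prop where
  pretilting : ∀ n : ℤ, n ≠ 0 → ∀ f : M ⟶ M⟦n⟧, f = 0
  generates : ∀ X : C, inThick M X

/-- The silting partial order `M ≥ N` : `T(M, N[>0]) = 0`. -/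
def siltGE (M N : C) : Prop := ∀ n : ℤ, 0 < n → ∀ f : M ⟶ N⟦n⟧, f = 0

variable (k C)

/-- A Serre functor: an autoequivalence `F` together with a bifunctorial perfect
pairing `T(X,Y) ≅ D T(Y, F X)`. -/
structure SerreFunctor where
  F : C ⥤ C
  isEquiv : F.IsEquivalence
  pairing : ∀ X Y : C, (X ⟶ Y) ≃ₗ[k] Module.Dual k (Y ⟶ F.obj X)
  natural_left : ∀ ⦃X X' Y : C⦄ (f : X' ⟶ X) (g : X ⟶ Y) (h : Y ⟶ F.obj X'),
    pairing X' Y (f ≫ g) h = pairing X Y g (h ≫ F.map f)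
  natural_right : ∀ ⦃X Y Y' : C⦄ (g : X ⟶ Y) (e : Y ⟶ Y') (h : Y' ⟶ F.obj X),
    pairing X Y' (g ≫ e) h = pairing X Y g (e ≫ h)

variable {k C}

/-- The quasi-inverse of a Serre functor. -/
noncomputable def SerreFunctor.inv (S : SerreFunctor k C) : C ⥤ C :=
  letI := S.isEquiv
  S.F.inv

/-- `ν_d := ν ∘ [-d]` applied to an object. -/
def SerreFunctor.nud (S : SerreFunctor k C) (d : ℤ) (X : C) : C :=
  S.F.obj (X⟦(-d)⟧)

/-- `ν_d^{-1} = [d] ∘ ν^{-1}` applied to an object. -/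
noncomputable def SerreFunctor.nudInv (S : SerreFunctor k C) (d : ℤ) (X : C) : C :=
  (S.inv.obj X)⟦d⟧

/-- iterated `ν_d^{-1}`. -/
noncomputable def SerreFunctor.nudInvIter (S : SerreFunctor k C) (d : ℤ) (n : ℕ) (X : C) : C :=
  (fun Y => S.nudInv d Y)^[n] X

/-- ℤ-indexed powers of ν_d. -/
noncomputable def SerreFunctor.nudZPow (S : SerreFunctor k C) (d : ℤ) : ℤ → C → C
  | Int.ofNat n => fun X => (fun Y => S.nud d Y)^[n] X
  | Int.negSucc n => fun X => (fun Y => S.nudInv d Y)^[n + 1] X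

/-- coaisle `T_M^{≤0} = M[<0]^⊥`. -/
def TleZ (M X : C) : Prop := ∀ n : ℤ, n < 0 → ∀ f : M⟦n⟧ ⟶ X, f = 0

/-- `T_M^{≥0} = M[>0]^⊥`. -/
def TgeZ (M X : C) : Prop := ∀ n : ℤ, 0 < n → ∀ f : M⟦n⟧ ⟶ X, f = 0

/-- the heart `H_M = T_M^{≤0} ∩ T_M^{≥0}`. -/
def inHeart (M X : C) : Prop := TleZ M X ∧ TgeZ M X

/-- `(T_M^{≤0}, T_M^{≥0})` is a t-structure: every object admits a truncation
triangle `A → X → B → A[1]` with `A ∈ T_M^{≤0}` and `B ∈ T_M^{≥1}`. -/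
def HasRightAdjacentTStructure (M : C) : Prop :=
  ∀ X : C, ∃ (A B : C) (f : A ⟶ X) (g : X ⟶ B) (h : B ⟶ A⟦(1 : ℤ)⟧),
    Triangle.mk f g h ∈ distinguishedTriangles ∧ TleZ M A ∧
    (∀ n : ℤ, 0 ≤ n → ∀ φ : M⟦n⟧ ⟶ B, φ = 0)

/-- membership in `add M * add M[1] * ⋯ * add M[e]`. -/
def inStarAdd (M : C) : ℕ → C → Prop
  | 0 => fun X => inAdd M X
  | (e + 1) => fun X => ∃ (A B : C) (f : A ⟶ X) (g : X ⟶ B⟦(1 : ℤ)⟧)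
      (h : B⟦(1 : ℤ)⟧ ⟶ A⟦(1 : ℤ)⟧),
      Triangle.mk f g h ∈ distinguishedTriangles ∧ inAdd M A ∧ inStarAdd M e B

/-- `M` is `d`-silting: silting and `T(M, ν_d^{-1} M[>0]) = 0`. -/
def IsDSilting (S : SerreFunctor k C) (d : ℤ) (M : C) : Prop :=
  IsSilting M ∧ siltGE M (S.nudInv d M)

/-- left `(add N)`-approximation. -/
def IsLeftApprox (N : C) {X X₀ : C} (f : X ⟶ X₀) : Prop :=
  inAdd N X₀ ∧ ∀ Z : C, inAdd N Z → ∀ g : X ⟶ Z, ∃ t : X₀ ⟶ Z, f ≫ t = g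

/-- minimal left `(add N)`-approximation. -/
def IsMinimalLeftApprox (N : C) {X X₀ : C} (f : X ⟶ X₀) : Prop :=
  IsLeftApprox N f ∧ ∀ g : X₀ ⟶ X₀, f ≫ g = f → IsIso g

/-- right `(add M)`-approximation. -/
def IsRightApprox (M : C) {M₀ N : C} (p : M₀ ⟶ N) : Prop :=
  inAdd M M₀ ∧ ∀ Z : C, inAdd M Z → ∀ g : Z ⟶ N, ∃ t : Z ⟶ M₀, t ≫ p = g

/-- minimal right `(add M)`-approximation. -/
def IsMinimalRightApprox (M : C) {M₀ N : C} (p : M₀ ⟶ N) : Prop :=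
  IsRightApprox M p ∧ ∀ g : M₀ ⟶ M₀, g ≫ p = p → IsIso g

/-- `add M₀ ∩ add X = 0`. -/
def addDisjoint (M₀ X : C) : Prop := ∀ Z : C, inAdd M₀ Z → inAdd X Z → IsZero Z

/-- epimorphism in the heart `H_M` (vanishing of the cokernel): for all `T ∈ H_M`,
composition with `f` is injective on `Hom(B,T)`. -/
def heartEpi (M : C) {A B : C} (f : A ⟶ B) : Prop :=
  ∀ T : C, inHeart M T → ∀ g : B ⟶ T, f ≫ g = 0 → g = 0

/-- a simple object of the heart `H_M`. -/
def SimpleInHeart (M S : C) : Prop :=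
  inHeart M S ∧ ¬ IsZero S ∧ ∀ T : C, inHeart M T → ∀ f : T ⟶ S, f = 0 ∨ heartEpi M f

/-- a semisimple object of the heart. -/
def SemisimpleInHeart (M S : C) : Prop :=
  ∃ (n : ℕ) (Y : Fin n → C), (∀ i, SimpleInHeart M (Y i)) ∧ Nonempty (S ≅ ⨁ Y)

/-- `H = H⁰(X)`: there is a truncation triangle `W → X → H → W[1]` with
`W ∈ T_M^{≤ -1}` and `H ∈ H_M` (for `X ∈ T_M^{≤0}`), and `q : X ⟶ H` is the
canonical map. -/
def IsH0 (M X H : C) (q : X ⟶ H) : Prop :=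
  ∃ (W : C) (f : W ⟶ X) (h : H ⟶ W⟦(1 : ℤ)⟧),
    Triangle.mk f q h ∈ distinguishedTriangles ∧
    (∀ n : ℤ, n ≤ 0 → ∀ φ : M⟦n⟧ ⟶ W, φ = 0) ∧ inHeart M H

/-- `S = top H` in the heart: `S` is a semisimple quotient of `H` through which every
morphism to a semisimple object factors. -/
def IsTopOf (M H S : C) : Prop :=
  SemisimpleInHeart M S ∧ ∃ q : H ⟶ S, heartEpi M q ∧
    ∀ S' : C, SemisimpleInHeart M S' → ∀ g : H ⟶ S', ∃ t : S ⟶ S', q ≫ t = g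

/-- `S = top H⁰(X)`. -/
def IsTopOfH0 (M X S : C) : Prop :=
  ∃ (H : C) (q : X ⟶ H), IsH0 M X H q ∧ IsTopOf M H S

end Preamble

section Helpers

variable {k : Type u} [Field k]
variable {C : Type u} [Category.{v} C] [Preadditive C] [CategoryTheory.Linear k C]
  [HasZeroObject C] [HasShift C ℤ] [∀ n : ℤ, (CategoryTheory.shiftFunctor C n).Additive]
  [Pretriangulated C] [HasFiniteBiproducts C]

/-- all morphisms from `A` to `B` vanish. -/
def HomZero (A B : C) : Prop := ∀ f : A ⟶ B, f = 0

lemma homZero_of_iso {A A' B B' : C} (eA : A ≅ A') (eB : B ≅ B')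
    (h : HomZero A' B') : HomZero A B := fun f => by
  have : eA.inv ≫ f ≫ eB.hom = 0 := h _
  calc f = eA.hom ≫ (eA.inv ≫ f ≫ eB.hom) ≫ eB.inv := by simp
  _ = 0 := by rw [this]; simp

lemma homZero_shift_iff {A B : C} (a : ℤ) :
    HomZero (A⟦a⟧) (B⟦a⟧) ↔ HomZero A B := by
  constructor
  · intro h f
    have := h ((shiftFunctor C a).map f)
    exact (shiftFunctor C a).map_injective (by simpa using this)
  · intro h f
    obtain ⟨g, rfl⟩ := (shiftFunctor C a).map_surjective f
    rw [h g, Functor.map_zero]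

lemma homZero_shift_right_iff {A B : C} (m : ℤ) :
    HomZero A (B⟦m⟧) ↔ HomZero (A⟦-m⟧) B := by
  constructor
  · intro h
    refine homZero_of_iso (Iso.refl _)
      ((shiftFunctorCompIsoId C m (-m) (by omega)).app B).symm ?_
    exact (homZero_shift_iff (-m)).2 h
  · intro h
    refine homZero_of_iso ((shiftFunctorCompIsoId C (-m) m (by omega)).app A).symm
      (Iso.refl _) ?_
    exact (homZero_shift_iff m).2 h

lemma homZero_of_inAdd_src {M A W : C} (hA : inAdd M A) (h : HomZero M W) :
    HomZero A W := fun f => by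
  obtain ⟨n, ι, ρ, hir⟩ := hA
  have h0 : ρ ≫ f = 0 := by
    apply biproduct.hom_ext'
    intro j
    simp [h _]
  calc f = (ι ≫ ρ) ≫ f := by rw [hir]; simp
  _ = ι ≫ (ρ ≫ f) := by simp
  _ = 0 := by rw [h0]; simp

lemma homZero_of_inAdd_tgt {M B V : C} (hB : inAdd M B) (h : HomZero V M) :
    HomZero V B := fun f => by
  obtain ⟨n, ι, ρ, hir⟩ := hB
  have h0 : f ≫ ι = 0 := by
    apply biproduct.hom_ext
    intro j
    simp [h _]
  calc f = f ≫ (ι ≫ ρ) := by rw [hir]; simp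
  _ = 0 := by rw [← Category.assoc, h0]; simp

end Helpers
section Helpers2
set_option linter.unusedSectionVars false

variable {k : Type u} [Field k]
variable {C : Type u} [Category.{v} C] [Preadditive C] [CategoryTheory.Linear k C]
  [HasZeroObject C] [HasShift C ℤ] [∀ n : ℤ, (CategoryTheory.shiftFunctor C n).Additive]
  [Pretriangulated C] [HasFiniteBiproducts C]

lemma inAdd_self (M : C) : inAdd M M := by
  refine ⟨1, biproduct.ι (fun _ : Fin 1 => M) 0, biproduct.π (fun _ : Fin 1 => M) 0, ?_⟩
  simp

lemma inAdd_map {M X : C} (G : C ⥤ C) [G.Additive] (h : inAdd M X) :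
    inAdd (G.obj M) (G.obj X) := by
  obtain ⟨n, ι, ρ, hir⟩ := h
  haveI : PreservesBiproduct (fun _ : Fin n => M) G :=
    PreservesBiproductsOfShape.preserves (F := G)
  refine ⟨n, G.map ι ≫ (G.mapBiproduct (fun _ : Fin n => M)).hom,
    (G.mapBiproduct (fun _ : Fin n => M)).inv ≫ G.map ρ, ?_⟩
  rw [Category.assoc, ← Category.assoc (G.mapBiproduct _).hom, Iso.hom_inv_id,
    Category.id_comp, ← G.map_comp, hir, G.map_id]

lemma inAdd_of_retract {M X Z : C} (i : Z ⟶ X) (r : X ⟶ Z) (hir : i ≫ r = 𝟙 Z)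
    (h : inAdd M X) : inAdd M Z := by
  obtain ⟨n, ι, ρ, h2⟩ := h
  exact ⟨n, i ≫ ι, ρ ≫ r, by
    rw [Category.assoc, ← Category.assoc ι, h2, Category.id_comp, hir]⟩

def shiftAddIso (A : C) (a b : ℤ) : A⟦a⟧⟦b⟧ ≅ A⟦a + b⟧ :=
  ((shiftFunctorAdd C a b).app A).symm

/-- Serre flip. -/
lemma serre_flip (S : SerreFunctor k C) (X Z : C) :
    HomZero X Z ↔ HomZero Z (S.F.obj X) := by
  constructor
  · intro h v
    rw [← Module.forall_dual_apply_eq_zero_iff k v]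
    intro φ
    obtain ⟨g, rfl⟩ : ∃ g, S.pairing X Z g = φ := ⟨(S.pairing X Z).symm φ, by simp⟩
    rw [h g, map_zero]
    rfl
  · intro h g
    have : S.pairing X Z g = 0 := by
      apply LinearMap.ext
      intro v
      rw [h v, map_zero]
      rfl
    have h2 : S.pairing X Z g = S.pairing X Z 0 := by rw [this, map_zero]
    exact (S.pairing X Z).injective h2

/-- counit iso `F (ν⁻¹ W) ≅ W`. -/
noncomputable def nuCounit (S : SerreFunctor k C) (W : C) : S.F.obj (S.inv.obj W) ≅ W :=
  letI := S.isEquiv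
  S.F.asEquivalence.counitIso.app W

/-- flip with `ν⁻¹` : `Hom(B, W) = 0 ↔ Hom(ν⁻¹ W, B) = 0`. -/
lemma nu_flip (S : SerreFunctor k C) (B W : C) :
    HomZero B W ↔ HomZero (S.inv.obj W) B := by
  rw [serre_flip S (S.inv.obj W) B]
  constructor
  · intro h
    exact homZero_of_iso (Iso.refl _) (nuCounit S W) h
  · intro h
    exact homZero_of_iso (Iso.refl _) (nuCounit S W).symm h

end Helpers2
section Helpers3
set_option linter.unusedSectionVars false
set_option maxHeartbeats 1000000
attribute [local instance] hasBinaryBiproducts_of_finite_biproducts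

variable {k : Type u} [Field k]
variable {C : Type u} [Category.{v} C] [Preadditive C] [CategoryTheory.Linear k C]
  [HasZeroObject C] [HasShift C ℤ] [∀ n : ℤ, (CategoryTheory.shiftFunctor C n).Additive]
  [Pretriangulated C] [HasFiniteBiproducts C]

lemma inThick_of_iso {M X Z : C} (e : X ≅ Z) (h : inThick M Z) : inThick M X :=
  inThick.retractOf X Z h ⟨e.hom, e.inv, e.hom_inv_id⟩

/-- split of a `Fin (n+1)`-indexed biproduct. -/
noncomputable def biproductFinSuccIso (n : ℕ) (Yf : Fin (n + 1) → C) :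
    (⨁ Yf) ≅ Yf 0 ⊞ ⨁ (fun i : Fin n => Yf i.succ) := by
  set h : (⨁ Yf) ⟶ Yf 0 ⊞ ⨁ (fun i : Fin n => Yf i.succ) :=
    biprod.lift (biproduct.π Yf 0) (biproduct.lift fun i => biproduct.π Yf i.succ) with hdef
  set v : (Yf 0 ⊞ ⨁ (fun i : Fin n => Yf i.succ)) ⟶ ⨁ Yf :=
    biprod.desc (biproduct.ι Yf 0) (biproduct.desc fun i => biproduct.ι Yf i.succ) with vdef
  have h0 : biproduct.ι Yf 0 ≫ h = biprod.inl := by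
    apply biprod.hom_ext <;> simp [hdef]
    · apply biproduct.hom_ext
      intro j
      simp [biproduct.ι_π, (Fin.succ_ne_zero _).symm]
  have hs : ∀ j : Fin n, biproduct.ι Yf j.succ ≫ h =
      biproduct.ι (fun i : Fin n => Yf i.succ) j ≫ biprod.inr := by
    intro j
    apply biprod.hom_ext <;> simp [hdef, biproduct.ι_π, Fin.succ_ne_zero]
    · apply biproduct.hom_ext
      intro i
      simp [biproduct.ι_π, Fin.succ_inj, Fin.ext_iff]
  refine ⟨h, v, ?_, ?_⟩
  · apply biproduct.hom_ext'
    intro j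
    induction j using Fin.cases with
    | zero => rw [← Category.assoc, h0]; simp [vdef]
    | succ j => rw [← Category.assoc, hs j]; simp [vdef]
  · apply biprod.hom_ext'
    · simp only [vdef, biprod.inl_desc_assoc, h0, Category.comp_id]
    · apply biproduct.hom_ext'
      intro j
      simp only [vdef, biprod.inr_desc_assoc, biproduct.ι_desc_assoc, hs j, Category.comp_id]

lemma inThick_biprod {M X Z : C} (hX : inThick M X) (hZ : inThick M Z) :
    inThick M (X ⊞ Z) :=
  inThick.ext2 _ (binaryBiproductTriangle_distinguished X Z) hX hZ

lemma inThick_biproduct {M : C} (n : ℕ) (Yf : Fin n → C) (h : ∀ i, inThick M (Yf i)) :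
    inThick M (⨁ Yf) := by
  induction n with
  | zero =>
    refine inThick.retractOf _ M inThick.base ⟨0, 0, ?_⟩
    apply biproduct.hom_ext
    intro j
    exact j.elim0
  | succ n ih =>
    refine inThick_of_iso (biproductFinSuccIso n Yf) ?_
    exact inThick_biprod (h 0) (ih _ (fun i => h i.succ))

lemma inThick_of_inAdd {M P X : C} (hP : inThick M P) (h : inAdd P X) : inThick M X := by
  obtain ⟨n, ι, ρ, hir⟩ := h
  exact inThick.retractOf _ _ (inThick_biproduct n _ (fun _ => hP)) ⟨ι, ρ, hir⟩

lemma inThick_mono {M M' X : C} (hM : inThick M' M) (h : inThick M X) : inThick M' X := by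
  induction h with
  | base => exact hM
  | shift X n _ ih => exact inThick.shift X n ih
  | retractOf X Y _ hr ih => exact inThick.retractOf X Y ih hr
  | ext2 T hT _ _ ih1 ih3 => exact inThick.ext2 T hT ih1 ih3

end Helpers3
section Helpers4
set_option linter.unusedSectionVars false
set_option maxHeartbeats 1000000

variable {k : Type u} [Field k]
variable {C : Type u} [Category.{v} C] [Preadditive C] [CategoryTheory.Linear k C]
  [HasZeroObject C] [HasShift C ℤ] [∀ n : ℤ, (CategoryTheory.shiftFunctor C n).Additive]
  [Pretriangulated C] [HasFiniteBiproducts C]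

/-- `A⟦a⟧⟦b⟧ ≅ A⟦c⟧` when `a + b = c`. -/
noncomputable def shiftAddIso' (A : C) (a b c : ℤ) (hc : a + b = c) :
    A⟦a⟧⟦b⟧ ≅ A⟦c⟧ :=
  ((shiftFunctorAdd' C a b c hc).app A).symm

noncomputable def shiftZeroIso (A : C) : A⟦(0 : ℤ)⟧ ≅ A :=
  (shiftFunctorZero C ℤ).app A

lemma homZero_shift_left_iff {A B : C} (a : ℤ) :
    HomZero (A⟦a⟧) B ↔ HomZero A (B⟦-a⟧) := by
  rw [homZero_shift_right_iff (-a), neg_neg]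

lemma homZero_twist {A B : C} {m : ℤ} (hz : HomZero A (B⟦m⟧)) (a b : ℤ)
    (hab : m + a = b) : HomZero (A⟦a⟧) (B⟦b⟧) := by
  have h1 : HomZero (A⟦a⟧) (B⟦m⟧⟦a⟧) := (homZero_shift_iff a).2 hz
  exact homZero_of_iso (Iso.refl _) (shiftAddIso' B m a b hab).symm h1

lemma homZero_biprod_src {A B W : C} (hA : HomZero A W) (hB : HomZero B W) :
    HomZero (A ⊞ B) W := fun f => by
  apply biprod.hom_ext'
  · rw [hA (biprod.inl ≫ f), comp_zero]
  · rw [hB (biprod.inr ≫ f), comp_zero]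

lemma homZero_biprod_tgt {V A B : C} (hA : HomZero V A) (hB : HomZero V B) :
    HomZero V (A ⊞ B) := fun f => by
  apply biprod.hom_ext
  · rw [hA (f ≫ biprod.fst), zero_comp]
  · rw [hB (f ≫ biprod.snd), zero_comp]

noncomputable def mapBiprodIso (G : C ⥤ C) [G.Additive] (X Z : C) :
    G.obj (X ⊞ Z) ≅ G.obj X ⊞ G.obj Z := by
  haveI : PreservesBiproductsOfShape WalkingPair G := PreservesFiniteBiproducts.preserves
  haveI := preservesBinaryBiproducts_of_preservesBiproducts G
  exact G.mapBiprod X Z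

/-- presilting vanishing on `add M` with shifts. -/
lemma presAdd {M : C} (hp : ∀ n : ℤ, 0 < n → HomZero M (M⟦n⟧))
    {A B : C} (hA : inAdd M A) (hB : inAdd M B) (a b : ℤ) (hab : a < b) :
    HomZero (A⟦a⟧) (B⟦b⟧) := by
  have h1 : HomZero (M⟦a⟧) (M⟦b⟧) := homZero_twist (hp (b - a) (by omega)) a b (by omega)
  exact homZero_of_inAdd_src (inAdd_map (shiftFunctor C a) hA)
    (homZero_of_inAdd_tgt (inAdd_map (shiftFunctor C b) hB) h1)

lemma presAdd0 {M : C} (hp : ∀ n : ℤ, 0 < n → HomZero M (M⟦n⟧))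
    {A B : C} (hA : inAdd M A) (hB : inAdd M B) (b : ℤ) (hb : 0 < b) :
    HomZero A (B⟦b⟧) :=
  homZero_of_iso (shiftZeroIso A).symm (Iso.refl _) (presAdd hp hA hB 0 b hb)

/-- main Serre-duality flip: `Hom(X, ν⁻¹ W) = 0 ↔ Hom(F X, W) = 0`. -/
lemma flipFA (S : SerreFunctor k C) (X W : C) :
    HomZero X (S.inv.obj W) ↔ HomZero (S.F.obj X) W :=
  (serre_flip S X (S.inv.obj W)).trans (nu_flip S (S.F.obj X) W).symm

end Helpers4
section MainLemmas
set_option linter.unusedSectionVars false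
set_option maxHeartbeats 1000000

variable {k : Type u} [Field k]
variable {C : Type u} [Category.{v} C] [Preadditive C] [CategoryTheory.Linear k C]
  [HasZeroObject C] [HasShift C ℤ] [∀ n : ℤ, (CategoryTheory.shiftFunctor C n).Additive]
  [Pretriangulated C] [HasFiniteBiproducts C]

lemma L_NY {M N N' N₀ Y : C} (hp : ∀ n : ℤ, 0 < n → HomZero M (M⟦n⟧))
    (hN : inAdd M N) (hN' : inAdd M N') (hN₀ : inAdd N' N₀)
    {f : N ⟶ N₀} {g : N₀ ⟶ Y} {h : Y ⟶ N⟦(1 : ℤ)⟧}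
    (hT : Triangle.mk f g h ∈ distinguishedTriangles)
    (n : ℤ) (hn : 0 < n) {A : C} (hA : inAdd M A) : HomZero A (Y⟦n⟧) := by
  rw [homZero_shift_right_iff n]
  intro φ
  have h1 : φ ≫ h = 0 := presAdd hp hA hN (-n) 1 (by omega) _
  obtain ⟨ψ, hψ⟩ := Triangle.coyoneda_exact₃ _ hT φ h1
  have hψ0 : ψ = 0 := by
    refine homZero_of_inAdd_tgt hN₀ ?_ ψ
    exact homZero_of_iso (Iso.refl _) (shiftZeroIso N').symm
      (presAdd hp hA hN' (-n) 0 (by omega))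
  rw [hψ, hψ0]; exact zero_comp

lemma L_YN' {M N N' N₀ Y : C} (hp : ∀ n : ℤ, 0 < n → HomZero M (M⟦n⟧))
    (hN : inAdd M N) (hN' : inAdd M N') (hN₀ : inAdd N' N₀)
    {f : N ⟶ N₀} {g : N₀ ⟶ Y} {h : Y ⟶ N⟦(1 : ℤ)⟧}
    (happrox : ∀ Z : C, inAdd N' Z → ∀ u : N ⟶ Z, ∃ t : N₀ ⟶ Z, f ≫ t = u)
    (hT : Triangle.mk f g h ∈ distinguishedTriangles)
    (n : ℤ) (hn : 0 < n) : HomZero Y (N'⟦n⟧) := by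
  intro φ
  have h1 : g ≫ φ = 0 := homZero_of_inAdd_src hN₀ (presAdd0 hp hN' hN' n hn) _
  obtain ⟨ψ, hψ⟩ := Triangle.yoneda_exact₃ _ hT φ h1
  by_cases h2 : n = 1
  · subst h2
    obtain ⟨u, rfl⟩ := (shiftFunctor C (1 : ℤ)).map_surjective ψ
    obtain ⟨t, ht⟩ := happrox N' (inAdd_self N') u
    have h3 : (Triangle.mk f g h).mor₃ ≫ (shiftFunctor C (1 : ℤ)).map f = 0 :=
      Pretriangulated.comp_distTriang_mor_zero₃₁ _ hT
    rw [hψ, ← ht]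
    erw [Functor.map_comp]
    rw [← Category.assoc]
    erw [h3]; exact zero_comp
  · have hψ0 : ψ = 0 := presAdd hp hN hN' 1 n (by omega) ψ
    rw [hψ, hψ0]; exact comp_zero

lemma L_YY {M N N' N₀ Y : C} (hp : ∀ n : ℤ, 0 < n → HomZero M (M⟦n⟧))
    (hN : inAdd M N) (hN' : inAdd M N') (hN₀ : inAdd N' N₀)
    {f : N ⟶ N₀} {g : N₀ ⟶ Y} {h : Y ⟶ N⟦(1 : ℤ)⟧}
    (happrox : ∀ Z : C, inAdd N' Z → ∀ u : N ⟶ Z, ∃ t : N₀ ⟶ Z, f ≫ t = u)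
    (hT : Triangle.mk f g h ∈ distinguishedTriangles)
    (n : ℤ) (hn : 0 < n) : HomZero Y (Y⟦n⟧) := by
  intro φ
  have h1 : g ≫ φ = 0 :=
    homZero_of_inAdd_src hN₀ (L_NY hp hN hN' hN₀ hT n hn hN') _
  obtain ⟨ψ, hψ⟩ := Triangle.yoneda_exact₃ _ hT φ h1
  by_cases h2 : n = 1
  · subst h2
    obtain ⟨u, rfl⟩ := (shiftFunctor C (1 : ℤ)).map_surjective ψ
    have hu : u ≫ h = 0 := presAdd0 hp hN hN 1 one_pos _
    obtain ⟨v, hv⟩ := Triangle.coyoneda_exact₃ _ hT u hu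
    have h3 : (Triangle.mk f g h).mor₃ ≫ (shiftFunctor C (1 : ℤ)).map v = 0 :=
      homZero_of_inAdd_tgt (inAdd_map (shiftFunctor C (1 : ℤ)) hN₀)
        (L_YN' hp hN hN' hN₀ happrox hT 1 one_pos) _
    rw [hψ, hv]
    erw [Functor.map_comp]
    rw [← Category.assoc]
    erw [h3]; exact zero_comp
  · have hψ0 : ψ = 0 :=
      homZero_twist (L_NY hp hN hN' hN₀ hT (n - 1) (by omega) hN) 1 n (by omega) ψ
    rw [hψ, hψ0]; exact comp_zero

lemma keyMM (S : SerreFunctor k C) (d : ℤ) {M : C} (hsilt : siltGE M (S.nudInv d M))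
    (i : ℤ) (hi : i < -d) : HomZero (M⟦i⟧) (S.inv.obj M) := by
  have h1 : HomZero M (((S.inv.obj M)⟦d⟧)⟦-i - d⟧) := hsilt (-i - d) (by omega)
  have h2 : HomZero M ((S.inv.obj M)⟦-i⟧) :=
    homZero_of_iso (Iso.refl _) (shiftAddIso' _ d (-i - d) (-i) (by omega)).symm h1
  have h3 := (homZero_shift_right_iff (-i)).1 h2
  rwa [neg_neg] at h3

lemma keyAdd (S : SerreFunctor k C) (d : ℤ) {M : C} (hsilt : siltGE M (S.nudInv d M))
    {A B : C} (hA : inAdd M A) (hB : inAdd M B) (i : ℤ) (hi : i < -d) :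
    HomZero (A⟦i⟧) (S.inv.obj B) := by
  rw [flipFA]
  apply homZero_of_inAdd_tgt hB
  rw [← flipFA]
  exact homZero_of_inAdd_src (inAdd_map (shiftFunctor C i) hA) (keyMM S d hsilt i hi)

lemma keyY (S : SerreFunctor k C) (d : ℤ) {M N N' N₀ Y : C}
    (hsilt : siltGE M (S.nudInv d M))
    (hN : inAdd M N) (hN' : inAdd M N') (hN₀ : inAdd N' N₀)
    {f : N ⟶ N₀} {g : N₀ ⟶ Y} {h : Y ⟶ N⟦(1 : ℤ)⟧}
    (hT : Triangle.mk f g h ∈ distinguishedTriangles)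
    {B : C} (hB : inAdd M B) (j : ℤ) (hj : d + 1 < j) :
    HomZero Y ((S.inv.obj B)⟦j⟧) := by
  intro φ
  have h1 : g ≫ φ = 0 := by
    have hz : HomZero N' ((S.inv.obj B)⟦j⟧) := by
      rw [homZero_shift_right_iff j]
      exact keyAdd S d hsilt hN' hB (-j) (by omega)
    exact homZero_of_inAdd_src hN₀ hz _
  obtain ⟨ψ, hψ⟩ := Triangle.yoneda_exact₃ _ hT φ h1
  have hz2 : HomZero (N⟦(1 : ℤ)⟧) ((S.inv.obj B)⟦j⟧) := by
    rw [homZero_shift_right_iff j]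
    refine homZero_of_iso (shiftAddIso' N 1 (-j) (1 - j) (by omega)) (Iso.refl _) ?_
    exact keyAdd S d hsilt hN hB (1 - j) (by omega)
  rw [hψ, hz2 ψ]; exact comp_zero

lemma keyYtarget (S : SerreFunctor k C) (d : ℤ) {M N N' N₀ Y A : C}
    (hN : inAdd M N) (hN' : inAdd M N') (hN₀ : inAdd N' N₀)
    {f : N ⟶ N₀} {g : N₀ ⟶ Y} {h : Y ⟶ N⟦(1 : ℤ)⟧}
    (hT : Triangle.mk f g h ∈ distinguishedTriangles)
    (PA : ∀ B : C, inAdd M B → ∀ i : ℤ, i < -(d + 1) → HomZero (A⟦i⟧) (S.inv.obj B))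
    (i : ℤ) (hi : i < -(d + 1)) : HomZero (A⟦i⟧) (S.inv.obj Y) := by
  rw [flipFA]
  intro φ
  have h1 : φ ≫ h = 0 := by
    have c1 : HomZero ((A⟦i⟧)⟦(-1 : ℤ)⟧) (S.inv.obj N) :=
      homZero_of_iso (shiftAddIso' A i (-1) (i - 1) (by omega)) (Iso.refl _)
        (PA N hN (i - 1) (by omega))
    have c2 : HomZero (A⟦i⟧) ((S.inv.obj N)⟦(1 : ℤ)⟧) := by
      rw [homZero_shift_right_iff 1]
      exact c1
    have c3 : HomZero ((S.inv.obj N)⟦(1 : ℤ)⟧) (S.F.obj (A⟦i⟧)) := (serre_flip S _ _).1 c2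
    have c4 : HomZero (S.inv.obj N) ((S.F.obj (A⟦i⟧))⟦(-1 : ℤ)⟧) := by
      rw [← homZero_shift_left_iff 1]
      exact c3
    have c5 : HomZero ((S.F.obj (A⟦i⟧))⟦(-1 : ℤ)⟧) N := (nu_flip S _ N).2 c4
    have c6 : HomZero (S.F.obj (A⟦i⟧)) (N⟦(1 : ℤ)⟧) := by
      rw [homZero_shift_right_iff 1]
      exact c5
    exact c6 _
  obtain ⟨ψ, hψ⟩ := Triangle.coyoneda_exact₃ _ hT φ h1
  have hz : HomZero (S.F.obj (A⟦i⟧)) N₀ := by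
    apply homZero_of_inAdd_tgt hN₀
    rw [← flipFA]
    exact PA N' hN' i hi
  rw [hψ, hz ψ]; exact zero_comp

end MainLemmas

/-- left mutation of a `d`-silting object at a direct summand is
`(d+1)`-silting. -/
theorem statement4 {k : Type u} [Field k]
    {C : Type u} [Category.{v} C] [Preadditive C] [CategoryTheory.Linear k C]
    [HasZeroObject C] [HasShift C ℤ] [∀ n : ℤ, (CategoryTheory.shiftFunctor C n).Additive]
    [Pretriangulated C] [HasFiniteBiproducts C]
    (hfin : HomFinite k C) (hKS : KrullSchmidt (C := C))
    (S : SerreFunctor k C) (d : ℤ) (M N N' N₀ Y : C)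
    (hM : IsDSilting S d M) (hAdj : HasRightAdjacentTStructure M)
    (hdec : Nonempty (M ≅ N ⊞ N')) (hdisj : addDisjoint N N')
    (f : N ⟶ N₀) (g : N₀ ⟶ Y) (h : Y ⟶ N⟦(1 : ℤ)⟧)
    (hf : IsLeftApprox N' f)
    (hT : Triangle.mk f g h ∈ distinguishedTriangles) :
    IsDSilting S (d + 1) (Y ⊞ N') := by
  classical
  obtain ⟨e⟩ := hdec
  have hp : ∀ n : ℤ, 0 < n → HomZero M (M⟦n⟧) := fun n hn => hM.1.presilting n hn
  have hN : inAdd M N :=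
    inAdd_of_retract (biprod.inl ≫ e.inv) (e.hom ≫ biprod.fst) (by simp) (inAdd_self M)
  have hN' : inAdd M N' :=
    inAdd_of_retract (biprod.inr ≫ e.inv) (e.hom ≫ biprod.snd) (by simp) (inAdd_self M)
  have hN₀ : inAdd N' N₀ := hf.1
  have happrox := hf.2
  have hsilt : siltGE M (S.nudInv d M) := hM.2
  -- the `P` property for `Y` and `N'`
  have PY : ∀ B : C, inAdd M B → ∀ i : ℤ, i < -(d + 1) →
      HomZero (Y⟦i⟧) (S.inv.obj B) := by
    intro B hB i hi
    rw [homZero_shift_left_iff i]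
    exact keyY S d hsilt hN hN' hN₀ hT hB (-i) (by omega)
  have PN' : ∀ B : C, inAdd M B → ∀ i : ℤ, i < -(d + 1) →
      HomZero (N'⟦i⟧) (S.inv.obj B) := fun B hB i hi =>
    keyAdd S d hsilt hN' hB i (by omega)
  refine ⟨⟨?_, ?_⟩, ?_⟩
  · -- presilting
    intro n hn
    refine homZero_of_iso (Iso.refl _) (mapBiprodIso (shiftFunctor C n) Y N') ?_
    refine homZero_biprod_src ?_ ?_
    · exact homZero_biprod_tgt (L_YY hp hN hN' hN₀ happrox hT n hn)
        (L_YN' hp hN hN' hN₀ happrox hT n hn)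
    · exact homZero_biprod_tgt (L_NY hp hN hN' hN₀ hT n hn hN')
        (presAdd0 hp hN' hN' n hn)
  · -- generates
    intro X
    have tY : inThick (Y ⊞ N') Y :=
      inThick.retractOf _ _ inThick.base ⟨biprod.inl, biprod.fst, biprod.inl_fst⟩
    have tN' : inThick (Y ⊞ N') N' :=
      inThick.retractOf _ _ inThick.base ⟨biprod.inr, biprod.snd, biprod.inr_snd⟩
    have tN₀ : inThick (Y ⊞ N') N₀ := inThick_of_inAdd tN' hN₀
    have tN : inThick (Y ⊞ N') N := by
      refine inThick.ext2 (Triangle.mk f g h).invRotate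
        (Pretriangulated.inv_rot_of_distTriang _ hT) ?_ tN₀
      exact inThick.shift Y (-1) tY
    have tM : inThick (Y ⊞ N') M := inThick_of_iso e (inThick_biprod tN tN')
    exact inThick_mono tM (hM.1.generates X)
  · -- siltGE for ν_{d+1}
    intro n hn
    have e1 : ((S.inv.obj (Y ⊞ N'))⟦(d + 1 : ℤ)⟧)⟦n⟧ ≅ (S.inv.obj (Y ⊞ N'))⟦d + 1 + n⟧ :=
      shiftAddIso' _ (d + 1) n (d + 1 + n) rfl
    refine homZero_of_iso (Iso.refl _) e1 ?_
    rw [homZero_shift_right_iff (d + 1 + n)]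
    refine homZero_of_iso (mapBiprodIso (shiftFunctor C (-(d + 1 + n))) Y N')
      (Iso.refl _) ?_
    have hi : -(d + 1 + n) < -(d + 1) := by omega
    refine homZero_biprod_src ?_ ?_
    · rw [flipFA]
      refine homZero_biprod_tgt ?_ ?_
      · exact (flipFA S _ Y).1 (keyYtarget S d hN hN' hN₀ hT PY _ hi)
      · exact (flipFA S _ N').1 (PY N' hN' _ hi)
    · rw [flipFA]
      refine homZero_biprod_tgt ?_ ?_
      · exact (flipFA S _ Y).1 (keyYtarget S d hN hN' hN₀ hT PN' _ hi)
      · exact (flipFA S _ N').1 (PN' N' hN' _ hi)
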